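/- If ⟪-,-⟫ is a double bracket on A associated with the right bimodule structure, then its (12)-weak double Jacobiator wk(a,b,c) := ⟪a,b,c⟫ - τ_{(12)}⟪b,a,c⟫ satisfies wk(a,b,c₁c₂) = (1⊗1⊗c₁)·wk(a,b,c₂) + wk(a,b,c₁)·(1⊗1⊗c₂) for all a,b,c₁,c₂ ∈ A (products on A⊗A⊗A taken factorwise), and it is a derivation in each of its three entries. Consequently, ⟪-,-⟫ is (12)-weak Poisson if and only if wk(s,t,u) = 0 for all s,t,u in any generating set of A. -/

import Mathlib

open scoped TensorProduct

noncomputable section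

/-- A (`k`-linear) `A`-bimodule-type structure on a `k`-module `M`,
given by a three-slot action `a · d · b`. -/
structure BimodOn (k A M : Type*) [CommSemiring k] [Ring A] [Algebra k A]
    [AddCommMonoid M] [Module k M] where
  act : A → M → A → M
  add_left : ∀ (a a' : A) (d : M) (b : A), act (a + a') d b = act a d b + act a' d b
  add_mid : ∀ (a : A) (d d' : M) (b : A), act a (d + d') b = act a d b + act a d' b
  add_right : ∀ (a : A) (d : M) (b b' : A), act a d (b + b') = act a d b + act a d b'
  smul_left : ∀ (c : k) (a : A) (d : M) (b : A), act (c • a) d b = c • act a d b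
  smul_mid : ∀ (c : k) (a : A) (d : M) (b : A), act a (c • d) b = c • act a d b
  smul_right : ∀ (c : k) (a : A) (d : M) (b : A), act a d (c • b) = c • act a d b
  act_one_one : ∀ d : M, act 1 d 1 = d
  act_mul : ∀ (a a' : A) (d : M) (b b' : A), act a (act a' d b') b = act (a * a') d (b' * b)

/-- An `A`-bimodule structure on `A ⊗[k] A`. -/
abbrev BimodStr (k A : Type*) [CommSemiring k] [Ring A] [Algebra k A] :=
  BimodOn k A (A ⊗[k] A)

section Defs

variable (k A : Type*) [CommSemiring k] [Ring A] [Algebra k A]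

/-- The swap automorphism `°` of `A ⊗[k] A`, `a ⊗ b ↦ b ⊗ a`. -/
def swapT : A ⊗[k] A →ₗ[k] A ⊗[k] A := (TensorProduct.comm k A A).toLinearMap

variable {k A}

namespace BimodOn

/-- The swap bimodule structure `a * d * b = (a · d° · b)°` associated with a
bimodule structure on `A ⊗[k] A`. -/
def star (S : BimodStr k A) (a : A) (d : A ⊗[k] A) (b : A) : A ⊗[k] A :=
  swapT k A (S.act a (swapT k A d) b)

/-- A bimodule structure on `A ⊗[k] A` is swap-commuting if it commutes with its
swap bimodule structure. -/
def SwapCommuting (S : BimodStr k A) : Prop :=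
  ∀ (a₁ a₂ b₁ b₂ : A) (d : A ⊗[k] A),
    S.act a₁ (S.star a₂ d b₂) b₁ = S.star a₂ (S.act a₁ d b₁) b₂

end BimodOn

end Defs

/-- A double bracket on `A` associated with a bimodule structure `S` on `A ⊗[k] A`
(with swap bimodule structure `S.star`). -/
structure DoubleBracket {k A : Type*} [CommSemiring k] [Ring A] [Algebra k A]
    (S : BimodStr k A) where
  br : A →ₗ[k] A →ₗ[k] A ⊗[k] A
  antisymm : ∀ a b : A, br a b = - swapT k A (br b a)
  leibniz_right : ∀ a b c : A, br a (b * c) = S.act b (br a c) 1 + S.act 1 (br a b) c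
  leibniz_left : ∀ a b c : A, br (b * c) a = S.star b (br c a) 1 + S.star 1 (br b a) c

section Taus

variable (k A : Type*) [CommSemiring k] [Ring A] [Algebra k A]

/-- `τ_{(123)}` on `A^{⊗3}`: `a ⊗ b ⊗ c ↦ c ⊗ a ⊗ b`. -/
def tau123 : (A ⊗[k] A) ⊗[k] A →ₗ[k] (A ⊗[k] A) ⊗[k] A :=
  ((TensorProduct.comm k (A ⊗[k] A) A).trans (TensorProduct.assoc k A A A).symm).toLinearMap

/-- `τ_{(132)}` on `A^{⊗3}`: `a ⊗ b ⊗ c ↦ b ⊗ c ⊗ a`. -/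
def tau132 : (A ⊗[k] A) ⊗[k] A →ₗ[k] (A ⊗[k] A) ⊗[k] A :=
  ((TensorProduct.assoc k A A A).trans (TensorProduct.comm k A (A ⊗[k] A))).toLinearMap

/-- `τ_{(12)}` on `A^{⊗3}`: `a ⊗ b ⊗ c ↦ b ⊗ a ⊗ c`. -/
def tau12 : (A ⊗[k] A) ⊗[k] A →ₗ[k] (A ⊗[k] A) ⊗[k] A :=
  (TensorProduct.congr (TensorProduct.comm k A A) (LinearEquiv.refl k A)).toLinearMap

variable {k A}

/-- `⟪a, -⟫_L : A ⊗ A → A ⊗ A ⊗ A`, `b₁ ⊗ b₂ ↦ ⟪a, b₁⟫ ⊗ b₂`. -/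
def trL (br : A →ₗ[k] A →ₗ[k] A ⊗[k] A) (a : A) :
    A ⊗[k] A →ₗ[k] (A ⊗[k] A) ⊗[k] A :=
  TensorProduct.map (br a) LinearMap.id

/-- The double Jacobiator of a bilinear operation `A × A → A ⊗ A`:
`⟪a,b,c⟫ = ⟪a,⟪b,c⟫⟫_L + τ_{(123)} ⟪b,⟪c,a⟫⟫_L + τ_{(132)} ⟪c,⟪a,b⟫⟫_L`. -/
def jac (br : A →ₗ[k] A →ₗ[k] A ⊗[k] A) (a b c : A) : (A ⊗[k] A) ⊗[k] A :=
  trL br a (br b c) + tau123 k A (trL br b (br c a)) + tau132 k A (trL br c (br a b))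

end Taus

end

/-- The `(12)`-weak double Jacobiator `wk(a,b,c) = ⟪a,b,c⟫ - τ_{(12)} ⟪b,a,c⟫`. -/
noncomputable def wk12 {k A : Type*} [CommSemiring k] [Ring A] [Algebra k A]
    (br : A →ₗ[k] A →ₗ[k] A ⊗[k] A) (a b c : A) : (A ⊗[k] A) ⊗[k] A :=
  jac br a b c - tau12 k A (jac br b a c)

/-!
Under the right bimodule structure, `⟪a, -⟫` and `⟪-, a⟫` obey Leibniz rules with values in
`A ⊗ A` multiplied on the outer and on the inner factor respectively. Expanding the Jacobiator
with a product `c₁ c₂` in its last entry, these rules make it a derivation up to a cross term,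
quadratic in the bracket. Antisymmetry of the bracket shows that `τ_{(12)}` carries the cross term
of `(b, a)` to that of `(a, b)`, so the cross terms cancel in `wk`, which is hence a derivation in
its last entry. The weak Jacobiator is cyclically covariant, `wk(a,b,c) = τ_{(132)} wk(c,a,b)`,
which moves the derivation property to the other two entries. A linear map obeying a Leibniz rule
and vanishing on generators vanishes, and cycling the entries spreads the vanishing of `wk` from
triples of generators to all triples.
-/

theorem LinearMap.eq_zero_of_leibniz_of_adjoin_eq_top {R A B : Type*} [CommSemiring R]
    [Semiring A] [Algebra R A] [Ring B] [Module R B] (f : A →ₗ[R] B) (l r : A → B)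
    (hl : l 1 = 1) (hr : r 1 = 1) (hf : ∀ x y, f (x * y) = l x * f y + f x * r y)
    {s : Set A} (hs : Algebra.adjoin R s = ⊤) (h : ∀ x ∈ s, f x = 0) (x : A) : f x = 0 := by
  have hf₁ : f 1 = 0 := by simpa [hl, hr] using hf 1 1
  have hx : x ∈ Algebra.adjoin R s := hs ▸ Algebra.mem_top
  induction hx using Algebra.adjoin_induction with
  | mem x hx => exact h x hx
  | algebraMap c => rw [Algebra.algebraMap_eq_smul_one, map_smul, hf₁, smul_zero]
  | add x y _ _ hx hy => rw [map_add, hx, hy, add_zero]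
  | mul x y _ _ hx hy => rw [hf, hx, hy, mul_zero, zero_mul, add_zero]

section Permutations

variable {k A : Type*} [CommSemiring k] [Ring A] [Algebra k A]

@[simp] lemma swapT_tmul (a b : A) : swapT k A (a ⊗ₜ[k] b) = b ⊗ₜ[k] a := rfl

@[simp] lemma tau123_tmul (a b c : A) :
    tau123 k A ((a ⊗ₜ[k] b) ⊗ₜ[k] c) = (c ⊗ₜ[k] a) ⊗ₜ[k] b := rfl

@[simp] lemma tau132_tmul (a b c : A) :
    tau132 k A ((a ⊗ₜ[k] b) ⊗ₜ[k] c) = (b ⊗ₜ[k] c) ⊗ₜ[k] a := rfl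

@[simp] lemma tau12_tmul (a b c : A) :
    tau12 k A ((a ⊗ₜ[k] b) ⊗ₜ[k] c) = (b ⊗ₜ[k] a) ⊗ₜ[k] c := rfl

lemma swapT_mul (x y : A ⊗[k] A) : swapT k A (x * y) = swapT k A x * swapT k A y := by
  have : swapT k A = (Algebra.TensorProduct.comm k A A).toLinearMap :=
    TensorProduct.ext' fun _ _ => rfl
  rw [this]
  simp only [AlgEquiv.toLinearMap_apply, map_mul]

lemma swapT_swapT (x : A ⊗[k] A) : swapT k A (swapT k A x) = x :=
  TensorProduct.comm_comm k A A x

lemma tau123_mul (x y : (A ⊗[k] A) ⊗[k] A) :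
    tau123 k A (x * y) = tau123 k A x * tau123 k A y := by
  have : tau123 k A = ((Algebra.TensorProduct.comm k (A ⊗[k] A) A).trans
      (Algebra.TensorProduct.assoc k k k A A A).symm).toLinearMap :=
    TensorProduct.ext_threefold fun _ _ _ => rfl
  rw [this]
  simp only [AlgEquiv.toLinearMap_apply, map_mul]

lemma tau132_mul (x y : (A ⊗[k] A) ⊗[k] A) :
    tau132 k A (x * y) = tau132 k A x * tau132 k A y := by
  have : tau132 k A = ((Algebra.TensorProduct.assoc k k k A A A).trans
      (Algebra.TensorProduct.comm k A (A ⊗[k] A))).toLinearMap :=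
    TensorProduct.ext_threefold fun _ _ _ => rfl
  rw [this]
  simp only [AlgEquiv.toLinearMap_apply, map_mul]

lemma tau12_mul (x y : (A ⊗[k] A) ⊗[k] A) :
    tau12 k A (x * y) = tau12 k A x * tau12 k A y := by
  have : tau12 k A = (Algebra.TensorProduct.congr
      (Algebra.TensorProduct.comm k A A) AlgEquiv.refl).toLinearMap :=
    TensorProduct.ext_threefold fun _ _ _ => rfl
  rw [this]
  simp only [AlgEquiv.toLinearMap_apply, map_mul]

lemma tau132_tau123 (x : (A ⊗[k] A) ⊗[k] A) : tau132 k A (tau123 k A x) = x :=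
  LinearMap.congr_fun (TensorProduct.ext_threefold
    (g := tau132 k A ∘ₗ tau123 k A) (h := LinearMap.id) fun _ _ _ => rfl) x

lemma tau132_tau132 (x : (A ⊗[k] A) ⊗[k] A) : tau132 k A (tau132 k A x) = tau123 k A x :=
  LinearMap.congr_fun (TensorProduct.ext_threefold
    (g := tau132 k A ∘ₗ tau132 k A) (h := tau123 k A) fun _ _ _ => rfl) x

lemma tau132_tau12_tau132 (x : (A ⊗[k] A) ⊗[k] A) :
    tau132 k A (tau12 k A (tau132 k A x)) = tau12 k A x :=
  LinearMap.congr_fun (TensorProduct.ext_threefold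
    (g := tau132 k A ∘ₗ tau12 k A ∘ₗ tau132 k A) (h := tau12 k A) fun _ _ _ => rfl) x

end Permutations

section Embeddings

variable (k A : Type*) [CommSemiring k] [Ring A] [Algebra k A]

def embed23 : A ⊗[k] A →ₗ[k] (A ⊗[k] A) ⊗[k] A :=
  (TensorProduct.assoc k A A A).symm.toLinearMap ∘ₗ TensorProduct.mk k A (A ⊗[k] A) 1

def embed31 : A ⊗[k] A →ₗ[k] (A ⊗[k] A) ⊗[k] A := tau123 k A ∘ₗ embed23 k A

variable {k A}

@[simp] lemma embed23_tmul (a b : A) :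
    embed23 k A (a ⊗ₜ[k] b) = ((1 : A) ⊗ₜ[k] a) ⊗ₜ[k] b := rfl

@[simp] lemma embed31_tmul (a b : A) :
    embed31 k A (a ⊗ₜ[k] b) = (b ⊗ₜ[k] (1 : A)) ⊗ₜ[k] a := rfl

lemma tau123_tmul_one (d : A ⊗[k] A) : tau123 k A (d ⊗ₜ[k] (1 : A)) = embed23 k A d :=
  LinearMap.congr_fun (TensorProduct.ext' (g := tau123 k A ∘ₗ (TensorProduct.mk k _ A).flip 1)
    (h := embed23 k A) fun _ _ => rfl) d

lemma tau123_embed23 (d : A ⊗[k] A) : tau123 k A (embed23 k A d) = embed31 k A d := rfl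

lemma tau12_embed23 (d : A ⊗[k] A) : tau12 k A (embed23 k A d) = embed31 k A (swapT k A d) :=
  LinearMap.congr_fun (TensorProduct.ext' (g := tau12 k A ∘ₗ embed23 k A)
    (h := embed31 k A ∘ₗ swapT k A) fun _ _ => rfl) d

lemma tau12_embed31 (d : A ⊗[k] A) : tau12 k A (embed31 k A d) = embed23 k A (swapT k A d) :=
  LinearMap.congr_fun (TensorProduct.ext' (g := tau12 k A ∘ₗ embed31 k A)
    (h := embed23 k A ∘ₗ swapT k A) fun _ _ => rfl) d

end Embeddings

section RightTensor

variable {k M A : Type*} [CommSemiring k] [Semiring M] [Algebra k M] [Semiring A] [Algebra k A]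

lemma LinearMap.rTensor_one_tmul_mul (f : A →ₗ[k] M) (b : A) (x : A ⊗[k] A) :
    f.rTensor A (((1 : A) ⊗ₜ[k] b) * x) = ((1 : M) ⊗ₜ[k] b) * f.rTensor A x := by
  induction x using TensorProduct.induction_on with
  | zero => simp
  | tmul p q => simp [Algebra.TensorProduct.tmul_mul_tmul]
  | add u v hu hv => simp only [mul_add, map_add, hu, hv]

lemma LinearMap.rTensor_mul_one_tmul (f : A →ₗ[k] M) (b : A) (x : A ⊗[k] A) :
    f.rTensor A (x * ((1 : A) ⊗ₜ[k] b)) = f.rTensor A x * ((1 : M) ⊗ₜ[k] b) := by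
  induction x using TensorProduct.induction_on with
  | zero => simp
  | tmul p q => simp [Algebra.TensorProduct.tmul_mul_tmul]
  | add u v hu hv => simp only [add_mul, map_add, hu, hv]

end RightTensor

section RightBracket

variable {k A : Type*} [CommSemiring k] [Ring A] [Algebra k A]

def IsRightBimodStr (S : BimodStr k A) : Prop :=
  ∀ (a b : A) (d : A ⊗[k] A), S.act a d b = ((1 : A) ⊗ₜ[k] a) * d * ((1 : A) ⊗ₜ[k] b)

variable {S : BimodStr k A} (D : DoubleBracket S)

lemma DoubleBracket.br_mul_right (hS : IsRightBimodStr S) (a b c : A) :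
    D.br a (b * c) = ((1 : A) ⊗ₜ[k] b) * D.br a c + D.br a b * ((1 : A) ⊗ₜ[k] c) := by
  rw [D.leibniz_right, hS, hS, ← Algebra.TensorProduct.one_def, mul_one, one_mul]

lemma DoubleBracket.br_mul_left (hS : IsRightBimodStr S) (a b c : A) :
    D.br (b * c) a = (b ⊗ₜ[k] (1 : A)) * D.br c a + D.br b a * (c ⊗ₜ[k] (1 : A)) := by
  rw [D.leibniz_left, BimodOn.star, BimodOn.star, hS, hS]
  simp only [swapT_mul, swapT_tmul, swapT_swapT, ← Algebra.TensorProduct.one_def, mul_one,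
    one_mul]

lemma DoubleBracket.swapT_br (a b : A) : swapT k A (D.br a b) = -D.br b a := by
  rw [D.antisymm b a, neg_neg]

lemma trL_tmul_one_mul (hS : IsRightBimodStr S) (b c : A) (x : A ⊗[k] A) :
    trL D.br b ((c ⊗ₜ[k] (1 : A)) * x)
      = (((1 : A) ⊗ₜ[k] c) ⊗ₜ[k] (1 : A)) * trL D.br b x
        + (D.br b c ⊗ₜ[k] (1 : A)) * embed23 k A x := by
  induction x using TensorProduct.induction_on with
  | zero => simp
  | tmul p q =>
    simp only [trL, Algebra.TensorProduct.tmul_mul_tmul, TensorProduct.map_tmul,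
      LinearMap.id_coe, id_eq, embed23_tmul, one_mul, D.br_mul_right hS,
      TensorProduct.add_tmul]
  | add u v hu hv =>
    simp only [mul_add, map_add, hu, hv]
    abel

lemma trL_mul_tmul_one (hS : IsRightBimodStr S) (b c : A) (x : A ⊗[k] A) :
    trL D.br b (x * (c ⊗ₜ[k] (1 : A)))
      = embed23 k A x * (D.br b c ⊗ₜ[k] (1 : A))
        + trL D.br b x * (((1 : A) ⊗ₜ[k] c) ⊗ₜ[k] (1 : A)) := by
  induction x using TensorProduct.induction_on with
  | zero => simp
  | tmul p q =>
    simp only [trL, Algebra.TensorProduct.tmul_mul_tmul, TensorProduct.map_tmul,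
      LinearMap.id_coe, id_eq, embed23_tmul, mul_one, D.br_mul_right hS,
      TensorProduct.add_tmul]
  | add u v hu hv =>
    simp only [add_mul, map_add, hu, hv]
    abel

lemma trL_mul (hS : IsRightBimodStr S) (c₁ c₂ : A) (x : A ⊗[k] A) :
    trL D.br (c₁ * c₂) x
      = ((c₁ ⊗ₜ[k] (1 : A)) ⊗ₜ[k] (1 : A)) * trL D.br c₂ x
        + trL D.br c₁ x * ((c₂ ⊗ₜ[k] (1 : A)) ⊗ₜ[k] (1 : A)) := by
  induction x using TensorProduct.induction_on with
  | zero => simp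
  | tmul p q =>
    simp only [trL, Algebra.TensorProduct.tmul_mul_tmul, TensorProduct.map_tmul,
      LinearMap.id_coe, id_eq, one_mul, mul_one, D.br_mul_left hS, TensorProduct.add_tmul]
  | add u v hu hv =>
    simp only [mul_add, add_mul, map_add, hu, hv]
    abel

end RightBracket

section Jacobiator

variable {k A : Type*} [CommSemiring k] [Ring A] [Algebra k A]

def jacCross (br : A →ₗ[k] A →ₗ[k] A ⊗[k] A) (a b c₁ c₂ : A) : (A ⊗[k] A) ⊗[k] A :=
  embed23 k A (br b c₁) * embed31 k A (br c₂ a) + embed31 k A (br c₁ a) * embed23 k A (br b c₂)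

variable {S : BimodStr k A} (D : DoubleBracket S)

lemma jac_mul_right (hS : IsRightBimodStr S) (a b c₁ c₂ : A) :
    jac D.br a b (c₁ * c₂)
      = (((1 : A) ⊗ₜ[k] (1 : A)) ⊗ₜ[k] c₁) * jac D.br a b c₂
        + jac D.br a b c₁ * (((1 : A) ⊗ₜ[k] (1 : A)) ⊗ₜ[k] c₂)
        + jacCross D.br a b c₁ c₂ := by
  have hL (d : A ⊗[k] A) (c : A) : trL D.br a (((1 : A) ⊗ₜ[k] c) * d)
      = (((1 : A) ⊗ₜ[k] (1 : A)) ⊗ₜ[k] c) * trL D.br a d :=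
    (D.br a).rTensor_one_tmul_mul c d
  have hR (d : A ⊗[k] A) (c : A) : trL D.br a (d * ((1 : A) ⊗ₜ[k] c))
      = trL D.br a d * (((1 : A) ⊗ₜ[k] (1 : A)) ⊗ₜ[k] c) :=
    (D.br a).rTensor_mul_one_tmul c d
  rw [jac, D.br_mul_right hS, D.br_mul_left hS, jacCross]
  simp only [map_add, hL, hR, trL_tmul_one_mul D hS, trL_mul_tmul_one D hS, trL_mul D hS,
    tau123_mul, tau132_mul, tau132_tmul, tau123_tmul_one, tau123_embed23, embed23_tmul,
    mul_add, add_mul, jac]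
  abel

lemma tau12_jacCross (a b c₁ c₂ : A) :
    tau12 k A (jacCross D.br b a c₁ c₂) = jacCross D.br a b c₁ c₂ := by
  simp only [jacCross, map_add, tau12_mul, tau12_embed23, tau12_embed31, D.swapT_br, map_neg]
  rw [add_comm]
  congr 1 <;> exact neg_mul_neg (α := (A ⊗[k] A) ⊗[k] A) _ _

lemma jac_eq_tau132_jac (br : A →ₗ[k] A →ₗ[k] A ⊗[k] A) (a b c : A) :
    jac br a b c = tau132 k A (jac br c a b) := by
  simp only [jac, map_add, tau132_tau123, tau132_tau132]
  abel

end Jacobiator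

section WeakJacobiator

variable {k A : Type*} [CommSemiring k] [Ring A] [Algebra k A]

noncomputable def wk12ₗ (br : A →ₗ[k] A →ₗ[k] A ⊗[k] A) (a b : A) : A →ₗ[k] (A ⊗[k] A) ⊗[k] A where
  toFun := wk12 br a b
  map_add' c c' := by
    simp only [wk12, jac, trL, map_add, LinearMap.add_apply, TensorProduct.map_add_left]
    abel
  map_smul' r c := by
    simp only [wk12, jac, trL, map_add, map_smul, LinearMap.smul_apply, TensorProduct.map_smul_left,
      RingHom.id_apply, smul_add, smul_sub]

lemma wk12_eq_tau132_wk12 (br : A →ₗ[k] A →ₗ[k] A ⊗[k] A) (a b c : A) :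
    wk12 br a b c = tau132 k A (wk12 br c a b) := by
  rw [wk12, wk12, map_sub, ← jac_eq_tau132_jac, jac_eq_tau132_jac br a c b,
    tau132_tau12_tau132]

variable {S : BimodStr k A} (D : DoubleBracket S)

lemma wk12_mul_right (hS : IsRightBimodStr S) (a b c₁ c₂ : A) :
    wk12 D.br a b (c₁ * c₂)
      = (((1 : A) ⊗ₜ[k] (1 : A)) ⊗ₜ[k] c₁) * wk12 D.br a b c₂
        + wk12 D.br a b c₁ * (((1 : A) ⊗ₜ[k] (1 : A)) ⊗ₜ[k] c₂) := by
  rw [wk12, jac_mul_right D hS, jac_mul_right D hS, map_add, map_add, tau12_mul, tau12_mul,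
    tau12_tmul, tau12_tmul, tau12_jacCross, wk12, wk12, mul_sub, sub_mul]
  abel

lemma wk12_mul_middle (hS : IsRightBimodStr S) (a b₁ b₂ c : A) :
    wk12 D.br a (b₁ * b₂) c
      = (((1 : A) ⊗ₜ[k] b₁) ⊗ₜ[k] (1 : A)) * wk12 D.br a b₂ c
        + wk12 D.br a b₁ c * (((1 : A) ⊗ₜ[k] b₂) ⊗ₜ[k] (1 : A)) := by
  rw [wk12_eq_tau132_wk12, wk12_mul_right D hS, map_add, tau132_mul, tau132_mul, tau132_tmul,
    tau132_tmul, ← wk12_eq_tau132_wk12, ← wk12_eq_tau132_wk12]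

lemma wk12_mul_left (hS : IsRightBimodStr S) (a₁ a₂ b c : A) :
    wk12 D.br (a₁ * a₂) b c
      = ((a₁ ⊗ₜ[k] (1 : A)) ⊗ₜ[k] (1 : A)) * wk12 D.br a₂ b c
        + wk12 D.br a₁ b c * ((a₂ ⊗ₜ[k] (1 : A)) ⊗ₜ[k] (1 : A)) := by
  rw [wk12_eq_tau132_wk12, wk12_mul_middle D hS, map_add, tau132_mul, tau132_mul, tau132_tmul,
    tau132_tmul, ← wk12_eq_tau132_wk12, ← wk12_eq_tau132_wk12]

lemma wk12_eq_zero_of_adjoin_eq_top (hS : IsRightBimodStr S) {s : Set A}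
    (hs : Algebra.adjoin k s = ⊤) {a b : A} (h : ∀ u ∈ s, wk12 D.br a b u = 0) (c : A) :
    wk12 D.br a b c = 0 :=
  (wk12ₗ D.br a b).eq_zero_of_leibniz_of_adjoin_eq_top (fun c ↦ (1 ⊗ₜ[k] 1) ⊗ₜ[k] c)
    (fun c ↦ (1 ⊗ₜ[k] 1) ⊗ₜ[k] c) rfl rfl (wk12_mul_right D hS a b) hs h c

end WeakJacobiator

theorem right_weak_jacobiator_derivation_general
    {k A : Type*} [Field k] [Ring A] [Algebra k A]
    (S : BimodStr k A)
    (hS : ∀ (a b : A) (d : A ⊗[k] A),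
      S.act a d b = ((1 : A) ⊗ₜ[k] a) * d * ((1 : A) ⊗ₜ[k] b))
    (D : DoubleBracket S) :
    (∀ a b c₁ c₂ : A, wk12 D.br a b (c₁ * c₂)
      = (((1 : A) ⊗ₜ[k] (1 : A)) ⊗ₜ[k] c₁) * wk12 D.br a b c₂
        + wk12 D.br a b c₁ * (((1 : A) ⊗ₜ[k] (1 : A)) ⊗ₜ[k] c₂)) ∧
    (∀ a b₁ b₂ c : A, wk12 D.br a (b₁ * b₂) c
      = (((1 : A) ⊗ₜ[k] b₁) ⊗ₜ[k] (1 : A)) * wk12 D.br a b₂ c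
        + wk12 D.br a b₁ c * (((1 : A) ⊗ₜ[k] b₂) ⊗ₜ[k] (1 : A))) ∧
    (∀ a₁ a₂ b c : A, wk12 D.br (a₁ * a₂) b c
      = ((a₁ ⊗ₜ[k] (1 : A)) ⊗ₜ[k] (1 : A)) * wk12 D.br a₂ b c
        + wk12 D.br a₁ b c * ((a₂ ⊗ₜ[k] (1 : A)) ⊗ₜ[k] (1 : A))) ∧
    (∀ Sgen : Set A, Algebra.adjoin k Sgen = ⊤ →
      ((∀ a b c : A, wk12 D.br a b c = 0) ↔
        ∀ s ∈ Sgen, ∀ t ∈ Sgen, ∀ u ∈ Sgen, wk12 D.br s t u = 0)) := by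
  refine ⟨wk12_mul_right D hS, wk12_mul_middle D hS, wk12_mul_left D hS,
    fun Sgen hgen ↦ ⟨fun h s _ t _ u _ ↦ h s t u, fun h ↦ ?_⟩⟩
  have vanish_of_gen : ∀ {a b : A}, (∀ u ∈ Sgen, wk12 D.br a b u = 0) → ∀ c,
      wk12 D.br a b c = 0 :=
    wk12_eq_zero_of_adjoin_eq_top D hS hgen
  have h₁ : ∀ s ∈ Sgen, ∀ t ∈ Sgen, ∀ c, wk12 D.br s t c = 0 :=
    fun s hs t ht ↦ vanish_of_gen (h s hs t ht)
  have h₂ : ∀ s ∈ Sgen, ∀ b c, wk12 D.br s b c = 0 := fun s hs b ↦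
    vanish_of_gen fun u hu ↦ by rw [wk12_eq_tau132_wk12, h₁ u hu s hs, map_zero]
  exact fun a b ↦ vanish_of_gen fun u hu ↦ by rw [wk12_eq_tau132_wk12, h₂ u hu, map_zero]

/-- Lemma `R-wJac`: for a double bracket associated with the right
bimodule structure `a · d · b = d' ⊗ a d'' b`, the `(12)`-weak double Jacobiator is a
derivation in each of its three entries, and the double bracket is `(12)`-weak Poisson
iff the `(12)`-weak double Jacobiator vanishes on any generating set. -/
theorem right_weak_jacobiator_derivation
    {k A : Type*} [Field k] [CharZero k] [Ring A] [Algebra k A]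
    (S : BimodStr k A)
    (hS : ∀ (a b : A) (d : A ⊗[k] A),
      S.act a d b = ((1 : A) ⊗ₜ[k] a) * d * ((1 : A) ⊗ₜ[k] b))
    (D : DoubleBracket S) :
    (∀ a b c₁ c₂ : A, wk12 D.br a b (c₁ * c₂)
      = (((1 : A) ⊗ₜ[k] (1 : A)) ⊗ₜ[k] c₁) * wk12 D.br a b c₂
        + wk12 D.br a b c₁ * (((1 : A) ⊗ₜ[k] (1 : A)) ⊗ₜ[k] c₂)) ∧
    (∀ a b₁ b₂ c : A, wk12 D.br a (b₁ * b₂) c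
      = (((1 : A) ⊗ₜ[k] b₁) ⊗ₜ[k] (1 : A)) * wk12 D.br a b₂ c
        + wk12 D.br a b₁ c * (((1 : A) ⊗ₜ[k] b₂) ⊗ₜ[k] (1 : A))) ∧
    (∀ a₁ a₂ b c : A, wk12 D.br (a₁ * a₂) b c
      = ((a₁ ⊗ₜ[k] (1 : A)) ⊗ₜ[k] (1 : A)) * wk12 D.br a₂ b c
        + wk12 D.br a₁ b c * ((a₂ ⊗ₜ[k] (1 : A)) ⊗ₜ[k] (1 : A))) ∧
    (∀ Sgen : Set A, Algebra.adjoin k Sgen = ⊤ →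
      ((∀ a b c : A, wk12 D.br a b c = 0) ↔
        ∀ s ∈ Sgen, ∀ t ∈ Sgen, ∀ u ∈ Sgen, wk12 D.br s t u = 0)) :=
  right_weak_jacobiator_derivation_general S hS D
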